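/- arXiv:0707.0998 — 6 statements merged into one kernel-verified Lean document; each statement's English description precedes it below -/
import Mathlib

section
/- Let A be a real symmetric n×n matrix with A_{ij} ≥ 0 for all i ≠ j, and suppose u ∈ ℝ^n has all entries strictly positive and satisfies A u = 0. Then for every f ∈ ℝ^n, ⟨f ∘ u, (-A)(f ∘ u)⟩ = (1/2) ∑_{i,j} A_{ij} u_i u_j (f_i - f_j)^2, where (f ∘ u)_i = f_i u_i. In particular, -A is positive semidefinite. -/
/-!
Expanding `(f i - f j) ^ 2`, the square term `∑ i, ∑ j, A i j * u i * u j * f i ^ 2` and its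
mirror image vanish because `A *ᵥ u = 0` (for the mirror image after using `Aᵀ = A`), leaving
`-2` times the quadratic form of `A` at `f * u`. Off the diagonal every summand of the resulting
sum is nonnegative and on the diagonal it is zero; since `u` has no zero entry, every vector is of
the form `f * u`, so `-A` is positive semidefinite.
-/

open Matrix Finset

namespace Matrix

variable {ι R : Type*} [Fintype ι]

section CommRing

variable [CommRing R] {A : Matrix ι ι R} {u : ι → R}

lemma sum_sum_mul_eq_zero_of_mulVec_eq_zero (hAu : A *ᵥ u = 0) (g : ι → R) :
    ∑ i, ∑ j, A i j * u i * u j * g i = 0 := by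
  refine sum_eq_zero fun i _ => ?_
  calc ∑ j, A i j * u i * u j * g i = u i * g i * (A *ᵥ u) i := by
        simp only [mulVec, dotProduct, mul_sum]
        exact sum_congr rfl fun j _ => by ring
    _ = 0 := by simp [hAu]

lemma IsSymm.two_mul_dotProduct_neg_mulVec_eq_sum_sub_sq (hA : A.IsSymm) (hAu : A *ᵥ u = 0)
    (f : ι → R) :
    2 * ((f * u) ⬝ᵥ (-A *ᵥ (f * u))) = ∑ i, ∑ j, A i j * u i * u j * (f i - f j) ^ 2 := by
  have hleft := sum_sum_mul_eq_zero_of_mulVec_eq_zero hAu (f ^ 2)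
  have hright : ∑ i, ∑ j, A i j * u i * u j * f j ^ 2 = 0 := by
    rw [sum_comm, ← hleft]
    exact sum_congr rfl fun j _ => sum_congr rfl fun i _ => by
      rw [hA.apply j i, Pi.pow_apply]; ring
  have hcross : (f * u) ⬝ᵥ (A *ᵥ (f * u)) = ∑ i, ∑ j, A i j * u i * u j * (f i * f j) := by
    simp only [dotProduct, mulVec, mul_sum, Pi.mul_apply]
    exact sum_congr rfl fun i _ => sum_congr rfl fun j _ => by ring
  have hexpand : ∑ i, ∑ j, A i j * u i * u j * (f i - f j) ^ 2 =
      ∑ i, ∑ j, A i j * u i * u j * (f ^ 2) i - 2 * ∑ i, ∑ j, A i j * u i * u j * (f i * f j)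
        + ∑ i, ∑ j, A i j * u i * u j * f j ^ 2 := by
    simp only [mul_sum, ← sum_sub_distrib, ← sum_add_distrib, Pi.pow_apply]
    exact sum_congr rfl fun i _ => sum_congr rfl fun j _ => by ring
  rw [hexpand, hleft, hright, ← hcross, neg_mulVec, dotProduct_neg]
  ring

end CommRing

lemma sum_sum_mul_sub_sq_nonneg [CommRing R] [LinearOrder R] [IsOrderedRing R]
    {A : Matrix ι ι R} {u : ι → R} (hoff : ∀ i j, i ≠ j → 0 ≤ A i j) (hu : ∀ i, 0 ≤ u i)
    (f : ι → R) : 0 ≤ ∑ i, ∑ j, A i j * u i * u j * (f i - f j) ^ 2 := by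
  refine sum_nonneg fun i _ => sum_nonneg fun j _ => ?_
  rcases eq_or_ne i j with rfl | hij
  · simp
  · exact mul_nonneg (mul_nonneg (mul_nonneg (hoff i j hij) (hu i)) (hu j)) (sq_nonneg _)

section Field

variable [Field R] [LinearOrder R] [IsStrictOrderedRing R] {A : Matrix ι ι R} {u : ι → R}

theorem IsSymm.posSemidef_neg_of_mulVec_eq_zero [StarRing R] [TrivialStar R] (hA : A.IsSymm)
    (hoff : ∀ i j, i ≠ j → 0 ≤ A i j) (hu : ∀ i, 0 < u i) (hAu : A *ᵥ u = 0) :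
    (-A).PosSemidef := by
  refine .of_dotProduct_mulVec_nonneg (isHermitian_iff_isSymm.mpr hA.neg) fun x => ?_
  have hx : x = (x / u) * u := funext fun i => (div_mul_cancel₀ (x i) (hu i).ne').symm
  have hform := hA.two_mul_dotProduct_neg_mulVec_eq_sum_sub_sq hAu (x / u)
  have hsum := sum_sum_mul_sub_sq_nonneg hoff (fun i => (hu i).le) (x / u)
  rw [star_trivial, hx]
  linarith

end Field

end Matrix

/-- Ground state representation for finite matrices with nonnegative
off-diagonal entries: if `A u = 0` for a strictly positive vector `u`, then the
quadratic form of `-A` on Hadamard products `f ∘ u` has the stated form, and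
`-A` is positive semidefinite. -/
theorem groundStateRepresentation_matrix {n : ℕ} (A : Matrix (Fin n) (Fin n) ℝ)
    (hA : A.IsSymm) (hoff : ∀ i j, i ≠ j → 0 ≤ A i j)
    (u : Fin n → ℝ) (hu : ∀ i, 0 < u i) (hAu : A *ᵥ u = 0) :
    (∀ f : Fin n → ℝ,
      (fun i => f i * u i) ⬝ᵥ ((-A) *ᵥ (fun i => f i * u i)) =
        (1 / 2) * ∑ i, ∑ j, A i j * u i * u j * (f i - f j) ^ 2) ∧
    (-A).PosSemidef := by
  refine ⟨fun f => ?_, hA.posSemidef_neg_of_mulVec_eq_zero hoff hu hAu⟩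
  have hform := hA.two_mul_dotProduct_neg_mulVec_eq_sum_sub_sq hAu f
  change (f * u) ⬝ᵥ (-A *ᵥ (f * u)) = _
  linarith
end

section
/- Let H_0 and H_1 be real symmetric n×n matrices, and u_0, u_1 ∈ ℝ^n strictly positive vectors such that for all f ∈ ℝ^n, ⟨f∘u_0, H_0 (f∘u_0)⟩ = (1/2)∑_{i,j} c^{(0)}_{ij}(f_i-f_j)^2 and ⟨f∘u_1, H_1 (f∘u_1)⟩ = (1/2)∑_{i,j} c^{(1)}_{ij}(f_i-f_j)^2 with nonnegative coefficients c^{(0)}_{ij}, c^{(1)}_{ij} satisfying c^{(1)}_{ij} ≤ β_-^{-1} c^{(0)}_{ij}, where β_- = min_i (u_{0,i}/u_{1,i})^2 and β_+ = max_i (u_{0,i}/u_{1,i})^2, and set β = β_+/β_-. Let V be a diagonal matrix with V ≤ 0 (all diagonal entries ≤ 0), and let τ > 0. If g ∈ ℝ^n satisfies ⟨g∘u_0, (H_0+V)(g∘u_0)⟩ ≤ -τ ⟨g∘u_0, g∘u_0⟩, then ⟨g∘u_1, (H_1+βV)(g∘u_1)⟩ ≤ -τ ⟨g∘u_1, g∘u_1⟩.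 -/
open Matrix

/-- Finite-dimensional comparison lemma (Lemma 2.1): a negative-energy trial
vector for `H₀ + V` transfers to one for `H₁ + βV`. -/
theorem comparison_lemma {n : ℕ} (H0 H1 : Matrix (Fin n) (Fin n) ℝ)
    (hH0 : H0.IsSymm) (hH1 : H1.IsSymm)
    (u0 u1 : Fin n → ℝ) (hu0 : ∀ i, 0 < u0 i) (hu1 : ∀ i, 0 < u1 i)
    (c0 c1 : Fin n → Fin n → ℝ)
    (hc0 : ∀ i j, 0 ≤ c0 i j) (hc1 : ∀ i j, 0 ≤ c1 i j)
    (hrep0 : ∀ f : Fin n → ℝ,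
      (fun i => f i * u0 i) ⬝ᵥ H0 *ᵥ (fun i => f i * u0 i) =
        (1 / 2) * ∑ i, ∑ j, c0 i j * (f i - f j) ^ 2)
    (hrep1 : ∀ f : Fin n → ℝ,
      (fun i => f i * u1 i) ⬝ᵥ H1 *ᵥ (fun i => f i * u1 i) =
        (1 / 2) * ∑ i, ∑ j, c1 i j * (f i - f j) ^ 2)
    (βm βp : ℝ)
    (hβm : IsLeast (Set.range fun i => (u0 i / u1 i) ^ 2) βm)
    (hβp : IsGreatest (Set.range fun i => (u0 i / u1 i) ^ 2) βp)
    (hcc : ∀ i j, c1 i j ≤ βm⁻¹ * c0 i j)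
    (V : Fin n → ℝ) (hV : ∀ i, V i ≤ 0) (τ : ℝ) (hτ : 0 < τ)
    (g : Fin n → ℝ)
    (hg : (fun i => g i * u0 i) ⬝ᵥ (H0 + Matrix.diagonal V) *ᵥ (fun i => g i * u0 i)
        ≤ -τ * ((fun i => g i * u0 i) ⬝ᵥ (fun i => g i * u0 i))) :
    (fun i => g i * u1 i) ⬝ᵥ (H1 + (βp / βm) • Matrix.diagonal V) *ᵥ (fun i => g i * u1 i)
        ≤ -τ * ((fun i => g i * u1 i) ⬝ᵥ (fun i => g i * u1 i)) := by
  set w0 : Fin n → ℝ := fun i => g i * u0 i with hw0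
  set w1 : Fin n → ℝ := fun i => g i * u1 i with hw1
  obtain ⟨i0, hi0⟩ := hβm.1
  have hβm_pos : 0 < βm := by rw [← hi0]; exact pow_pos (div_pos (hu0 i0) (hu1 i0)) 2
  have hβp_pos : 0 < βp := lt_of_lt_of_le hβm_pos (hβp.2 hβm.1)
  have hlow : ∀ i, βm * u1 i ^ 2 ≤ u0 i ^ 2 := by
    intro i
    have h : βm ≤ (u0 i / u1 i) ^ 2 := hβm.2 ⟨i, rfl⟩
    rw [div_pow, le_div_iff₀ (pow_pos (hu1 i) 2)] at h
    linarith
  have hup : ∀ i, u0 i ^ 2 ≤ βp * u1 i ^ 2 := by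
    intro i
    have h : (u0 i / u1 i) ^ 2 ≤ βp := hβp.2 ⟨i, rfl⟩
    rw [div_pow, div_le_iff₀ (pow_pos (hu1 i) 2)] at h
    linarith
  have hdiag : ∀ w : Fin n → ℝ, w ⬝ᵥ (Matrix.diagonal V) *ᵥ w = ∑ i, V i * w i ^ 2 := by
    intro w
    simp only [dotProduct, Matrix.mulVec_diagonal]
    exact Finset.sum_congr rfl fun i _ => by ring
  have hgexp : w0 ⬝ᵥ H0 *ᵥ w0 + ∑ i, V i * w0 i ^ 2 ≤ -τ * (w0 ⬝ᵥ w0) := by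
    calc w0 ⬝ᵥ H0 *ᵥ w0 + ∑ i, V i * w0 i ^ 2
        = w0 ⬝ᵥ (H0 + Matrix.diagonal V) *ᵥ w0 := by
          rw [add_mulVec, dotProduct_add, hdiag]
      _ ≤ -τ * (w0 ⬝ᵥ w0) := hg
  have hA : w1 ⬝ᵥ H1 *ᵥ w1 ≤ βm⁻¹ * (w0 ⬝ᵥ H0 *ᵥ w0) := by
    rw [hrep1 g, hrep0 g]
    calc (1 / 2) * ∑ i, ∑ j, c1 i j * (g i - g j) ^ 2
        ≤ (1 / 2) * ∑ i, ∑ j, (βm⁻¹ * c0 i j) * (g i - g j) ^ 2 := by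
          gcongr with i _ j _
          · exact hcc i j
      _ = βm⁻¹ * ((1 / 2) * ∑ i, ∑ j, c0 i j * (g i - g j) ^ 2) := by
          rw [mul_left_comm βm⁻¹ ((1:ℝ)/2)]
          congr 1
          rw [Finset.mul_sum]
          refine Finset.sum_congr rfl fun i _ => ?_
          rw [Finset.mul_sum]
          exact Finset.sum_congr rfl fun j _ => by ring
  have hB : (βp / βm) * ∑ i, V i * w1 i ^ 2 ≤ βm⁻¹ * ∑ i, V i * w0 i ^ 2 := by
    rw [Finset.mul_sum, Finset.mul_sum]
    refine Finset.sum_le_sum fun i _ => ?_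
    have key : βp * (V i * w1 i ^ 2) ≤ V i * w0 i ^ 2 := by
      have h1 : w0 i ^ 2 ≤ βp * w1 i ^ 2 := by
        simp only [hw0, hw1, mul_pow]
        nlinarith [hup i, sq_nonneg (g i)]
      nlinarith [hV i]
    calc (βp / βm) * (V i * w1 i ^ 2) = βm⁻¹ * (βp * (V i * w1 i ^ 2)) := by
          rw [div_eq_inv_mul]; ring
      _ ≤ βm⁻¹ * (V i * w0 i ^ 2) :=
          mul_le_mul_of_nonneg_left key (inv_nonneg.mpr hβm_pos.le)
  have hS : w1 ⬝ᵥ w1 ≤ βm⁻¹ * (w0 ⬝ᵥ w0) := by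
    simp only [dotProduct, Finset.mul_sum]
    refine Finset.sum_le_sum fun i _ => ?_
    simp only [hw0, hw1]
    have h2 : βm * ((g i * u1 i) * (g i * u1 i)) ≤ (g i * u0 i) * (g i * u0 i) := by
      nlinarith [hlow i, sq_nonneg (g i)]
    have h3 := mul_le_mul_of_nonneg_left h2 (inv_nonneg.mpr hβm_pos.le)
    rw [← mul_assoc, inv_mul_cancel₀ hβm_pos.ne', one_mul] at h3
    exact h3
  calc w1 ⬝ᵥ (H1 + (βp / βm) • Matrix.diagonal V) *ᵥ w1
      = w1 ⬝ᵥ H1 *ᵥ w1 + (βp / βm) * ∑ i, V i * w1 i ^ 2 := by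
        rw [add_mulVec, dotProduct_add, smul_mulVec, dotProduct_smul, hdiag]
        simp [smul_eq_mul]
    _ ≤ βm⁻¹ * (w0 ⬝ᵥ H0 *ᵥ w0) + βm⁻¹ * ∑ i, V i * w0 i ^ 2 := add_le_add hA hB
    _ = βm⁻¹ * (w0 ⬝ᵥ H0 *ᵥ w0 + ∑ i, V i * w0 i ^ 2) := by ring
    _ ≤ βm⁻¹ * (-τ * (w0 ⬝ᵥ w0)) :=
        mul_le_mul_of_nonneg_left hgexp (inv_nonneg.mpr hβm_pos.le)
    _ ≤ -τ * (w1 ⬝ᵥ w1) := by nlinarith [mul_le_mul_of_nonneg_left hS hτ.le]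
end

section
/- Let H_0, H_1 be real symmetric n×n matrices satisfying the hypotheses of the comparison lemma (ground state representations with vectors u_0, u_1 and coefficient bound c^{(1)} ≤ β_-^{-1} c^{(0)}), let V be a diagonal matrix with nonpositive entries, and β = β_+/β_- with β_± the max/min of (u_{0,i}/u_{1,i})^2. Then for every j, the j-th smallest eigenvalue of H_1 + βV is at most the j-th smallest eigenvalue of H_0 + V whenever the latter is negative; more precisely, min(0, λ_j(H_1+βV)) ≤ min(0, λ_j(H_0+V)), where λ_j denotes the j-th smallest eigenvalue. -/
open Matrix

/-- The `j`-th smallest eigenvalue of a Hermitian matrix (eigenvalues sorted in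
increasing order). -/
noncomputable def sortedEigAsc {n : ℕ} {M : Matrix (Fin n) (Fin n) ℝ}
    (hM : M.IsHermitian) : Fin n → ℝ :=
  hM.eigenvalues ∘ Tuple.sort hM.eigenvalues

/-!
For `ψ = f u₀` the map `L ψ = (u₁ / u₀) ψ` gives `L ψ = f u₁`, so the ground state representations
turn `⟪L ψ, H₁ L ψ⟫` and `⟪ψ, H₀ ψ⟫` into Dirichlet energies of the same `f`, and
`c⁽¹⁾ ≤ β₋⁻¹ c⁽⁰⁾` compares them. Since `β₋ ≤ (u₀ / u₁)² ≤ β₊`, the same factor `β₋⁻¹` bounds the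
potential term `β V ≤ 0` and the norm: `⟪L ψ, (H₁ + β V) L ψ⟫ ≤ β₋⁻¹ ⟪ψ, (H₀ + V) ψ⟫` and
`‖L ψ‖² ≤ β₋⁻¹ ‖ψ‖²`. When `λ_j(H₀ + V) < 0`, `L` carries a `(j+1)`-dimensional subspace on which
the Rayleigh quotient of `H₀ + V` is at most `λ_j(H₀ + V)` to one on which that of `H₁ + β V` is
at most `λ_j(H₀ + V)` as well, and the Courant–Fischer principle concludes.
-/

open Finset Module

namespace Matrix.IsHermitian

variable {n : ℕ} {M : Matrix (Fin n) (Fin n) ℝ} (hM : M.IsHermitian)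

/-- `sortedEigCoord hM ψ m` is the coefficient of `ψ` along the eigenvector of `sortedEigAsc hM m`. -/
noncomputable def sortedEigCoord : (Fin n → ℝ) →ₗ[ℝ] (Fin n → ℝ) :=
  (Matrix.of fun m => ⇑(hM.eigenvectorBasis (Tuple.sort hM.eigenvalues m))).mulVecLin

lemma sortedEigCoord_apply (ψ : Fin n → ℝ) (m : Fin n) :
    hM.sortedEigCoord ψ m =
      inner ℝ (hM.eigenvectorBasis (Tuple.sort hM.eigenvalues m)) (WithLp.toLp 2 ψ) := by
  simp [sortedEigCoord, mulVec, EuclideanSpace.inner_eq_star_dotProduct, dotProduct_comm]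

lemma inner_eigenvectorBasis_mulVec (k : Fin n) (ψ : Fin n → ℝ) :
    inner ℝ (hM.eigenvectorBasis k) (WithLp.toLp 2 (M *ᵥ ψ)) =
      hM.eigenvalues k * inner ℝ (hM.eigenvectorBasis k) (WithLp.toLp 2 ψ) := by
  have hsymm : Mᵀ = M := by simpa [conjTranspose] using hM.eq
  simp only [EuclideanSpace.inner_eq_star_dotProduct, star_trivial]
  rw [dotProduct_comm, dotProduct_mulVec, ← mulVec_transpose, hsymm, hM.mulVec_eigenvectorBasis,
    smul_dotProduct, smul_eq_mul, dotProduct_comm]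

lemma dotProduct_self_eq_sum_sortedEigCoord_sq (ψ : Fin n → ℝ) :
    ψ ⬝ᵥ ψ = ∑ m, hM.sortedEigCoord ψ m ^ 2 := by
  have := (hM.eigenvectorBasis.sum_inner_mul_inner (WithLp.toLp 2 ψ) (WithLp.toLp 2 ψ)).symm
  rw [← Equiv.sum_comp (Tuple.sort hM.eigenvalues)] at this
  simp only [sortedEigCoord_apply, sq]
  simpa only [real_inner_comm, EuclideanSpace.inner_toLp_toLp, star_trivial] using this

lemma dotProduct_mulVec_eq_sum_sortedEigAsc_mul_sq (ψ : Fin n → ℝ) :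
    ψ ⬝ᵥ M *ᵥ ψ = ∑ m, sortedEigAsc hM m * hM.sortedEigCoord ψ m ^ 2 := by
  have := (hM.eigenvectorBasis.sum_inner_mul_inner (WithLp.toLp 2 ψ)
    (WithLp.toLp 2 (M *ᵥ ψ))).symm
  rw [← Equiv.sum_comp (Tuple.sort hM.eigenvalues)] at this
  simp only [inner_eigenvectorBasis_mulVec, EuclideanSpace.inner_toLp_toLp, star_trivial] at this
  rw [dotProduct_comm, this]
  refine sum_congr rfl fun m _ => ?_
  rw [sortedEigCoord_apply, real_inner_comm, sortedEigAsc, Function.comp_apply]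
  ring

noncomputable def sortedEigCoordKer (s : Finset (Fin n)) : Submodule ℝ (Fin n → ℝ) :=
  LinearMap.ker (LinearMap.funLeft ℝ ℝ ((↑) : s → Fin n) ∘ₗ hM.sortedEigCoord)

lemma mem_sortedEigCoordKer {s : Finset (Fin n)} {ψ : Fin n → ℝ} :
    ψ ∈ hM.sortedEigCoordKer s ↔ ∀ m ∈ s, hM.sortedEigCoord ψ m = 0 := by
  simp [sortedEigCoordKer, funext_iff, LinearMap.funLeft_apply]

lemma le_card_add_finrank_sortedEigCoordKer (s : Finset (Fin n)) :
    n ≤ #s + finrank ℝ (hM.sortedEigCoordKer s) := by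
  set restrict := LinearMap.funLeft ℝ ℝ ((↑) : s → Fin n) ∘ₗ hM.sortedEigCoord
  have hrange := (LinearMap.range restrict).finrank_le
  have hrank := LinearMap.finrank_range_add_finrank_ker restrict
  simp only [finrank_fintype_fun_eq_card, Fintype.card_coe, Fintype.card_fin] at hrange hrank
  change n ≤ #s + finrank ℝ (LinearMap.ker restrict)
  omega

lemma sortedEigAsc_le_of_le_finrank (j : Fin n) {W : Submodule ℝ (Fin n → ℝ)}
    (hW : (j : ℕ) + 1 ≤ finrank ℝ W) {t : ℝ} (ht : ∀ ψ ∈ W, ψ ⬝ᵥ M *ᵥ ψ ≤ t * (ψ ⬝ᵥ ψ)) :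
    sortedEigAsc hM j ≤ t := by
  obtain ⟨ψ, ⟨hψW, hψK⟩, hψ⟩ : ∃ ψ ∈ W ⊓ hM.sortedEigCoordKer (Iio j), ψ ≠ 0 := by
    refine Submodule.exists_mem_ne_zero_of_ne_bot fun hbot => ?_
    have hdim := Submodule.finrank_sup_add_finrank_inf_eq W (hM.sortedEigCoordKer (Iio j))
    have hK := hM.le_card_add_finrank_sortedEigCoordKer (Iio j)
    have hsup := (W ⊔ hM.sortedEigCoordKer (Iio j)).finrank_le
    rw [hbot, finrank_bot, Fin.card_Iio] at *
    simp only [finrank_fintype_fun_eq_card, Fintype.card_fin] at hsup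
    omega
  have hpos : 0 < ψ ⬝ᵥ ψ := by simpa using dotProduct_self_star_pos_iff.2 hψ
  have hlow : sortedEigAsc hM j * (ψ ⬝ᵥ ψ) ≤ ψ ⬝ᵥ M *ᵥ ψ := by
    rw [hM.dotProduct_self_eq_sum_sortedEigCoord_sq,
      hM.dotProduct_mulVec_eq_sum_sortedEigAsc_mul_sq, mul_sum]
    refine sum_le_sum fun m _ => ?_
    rcases lt_or_ge m j with hm | hm
    · simp [hM.mem_sortedEigCoordKer.1 hψK m (mem_Iio.2 hm)]
    · exact mul_le_mul_of_nonneg_right (Tuple.monotone_sort _ hm) (sq_nonneg _)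
  exact le_of_mul_le_mul_right (hlow.trans (ht ψ hψW)) hpos

lemma exists_le_finrank_forall_le_sortedEigAsc (j : Fin n) :
    ∃ W : Submodule ℝ (Fin n → ℝ), (j : ℕ) + 1 ≤ finrank ℝ W ∧
      ∀ ψ ∈ W, ψ ⬝ᵥ M *ᵥ ψ ≤ sortedEigAsc hM j * (ψ ⬝ᵥ ψ) := by
  refine ⟨hM.sortedEigCoordKer (Ioi j), ?_, fun ψ hψ => ?_⟩
  · have := hM.le_card_add_finrank_sortedEigCoordKer (Ioi j)
    rw [Fin.card_Ioi] at this
    omega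
  · rw [hM.dotProduct_self_eq_sum_sortedEigCoord_sq,
      hM.dotProduct_mulVec_eq_sum_sortedEigAsc_mul_sq, mul_sum]
    refine sum_le_sum fun m _ => ?_
    rcases le_or_gt m j with hm | hm
    · exact mul_le_mul_of_nonneg_right (Tuple.monotone_sort _ hm) (sq_nonneg _)
    · simp [hM.mem_sortedEigCoordKer.1 hψ m (mem_Ioi.2 hm)]

end Matrix.IsHermitian

theorem min_zero_sortedEigAsc_le_of_injective {n : ℕ} {A B : Matrix (Fin n) (Fin n) ℝ}
    (hA : A.IsHermitian) (hB : B.IsHermitian) {L : (Fin n → ℝ) →ₗ[ℝ] (Fin n → ℝ)}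
    (hL : Function.Injective L) {κ : ℝ} (hκ : 0 ≤ κ)
    (hform : ∀ ψ, L ψ ⬝ᵥ B *ᵥ L ψ ≤ κ * (ψ ⬝ᵥ A *ᵥ ψ))
    (hnorm : ∀ ψ, L ψ ⬝ᵥ L ψ ≤ κ * (ψ ⬝ᵥ ψ)) (j : Fin n) :
    min 0 (sortedEigAsc hB j) ≤ min 0 (sortedEigAsc hA j) := by
  set μ := sortedEigAsc hA j
  rcases le_or_gt 0 μ with hμ | hμ
  · rw [min_eq_left hμ]
    exact min_le_left _ _
  obtain ⟨W, hW, hWμ⟩ := hA.exists_le_finrank_forall_le_sortedEigAsc j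
  have hBμ : sortedEigAsc hB j ≤ μ := by
    refine hB.sortedEigAsc_le_of_le_finrank j (W := W.map L) ?_ ?_
    · rwa [← (Submodule.equivMapOfInjective L hL W).finrank_eq]
    · rintro _ ⟨ψ, hψ, rfl⟩
      calc L ψ ⬝ᵥ B *ᵥ L ψ ≤ κ * (ψ ⬝ᵥ A *ᵥ ψ) := hform ψ
        _ ≤ κ * (μ * (ψ ⬝ᵥ ψ)) := mul_le_mul_of_nonneg_left (hWμ ψ hψ) hκ
        _ = μ * (κ * (ψ ⬝ᵥ ψ)) := by ring
        _ ≤ μ * (L ψ ⬝ᵥ L ψ) := mul_le_mul_of_nonpos_left (hnorm ψ) hμ.le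
  rw [min_eq_right hμ.le]
  exact (min_le_right _ _).trans hBμ

section GroundState

variable {ι : Type*} {u0 u1 : ι → ℝ}

noncomputable def groundStateTransform (u0 u1 : ι → ℝ) : (ι → ℝ) →ₗ[ℝ] (ι → ℝ) :=
  LinearMap.mulLeft ℝ (u1 / u0)

lemma groundStateTransform_injective (hu0 : ∀ i, u0 i ≠ 0) (hu1 : ∀ i, u1 i ≠ 0) :
    Function.Injective (groundStateTransform u0 u1) :=
  (Pi.isUnit_iff.2 fun i => (div_ne_zero (hu1 i) (hu0 i)).isUnit).mul_right_injective

lemma exists_eq_mul_and_groundStateTransform_eq_mul (hu0 : ∀ i, u0 i ≠ 0) (ψ : ι → ℝ) :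
    ∃ f : ι → ℝ, ψ = (fun i => f i * u0 i) ∧
      groundStateTransform u0 u1 ψ = fun i => f i * u1 i := by
  refine ⟨ψ / u0, funext fun i => ?_, funext fun i => ?_⟩ <;>
    simp only [groundStateTransform, LinearMap.mulLeft_apply, Pi.mul_apply, Pi.div_apply] <;>
    field_simp [hu0 i]

variable [Fintype ι] {κ : ℝ}

lemma dotProduct_diagonal_mulVec_self [DecidableEq ι] (V x : ι → ℝ) :
    x ⬝ᵥ diagonal V *ᵥ x = ∑ i, V i * x i ^ 2 :=
  sum_congr rfl fun i _ => by rw [mulVec_diagonal]; ring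

lemma sum_mul_mul_sq_le {w0 w1 : ι → ℝ} (h : ∀ i, w1 i * u1 i ^ 2 ≤ κ * (w0 i * u0 i ^ 2))
    (f : ι → ℝ) : ∑ i, w1 i * (f i * u1 i) ^ 2 ≤ κ * ∑ i, w0 i * (f i * u0 i) ^ 2 := by
  rw [mul_sum]
  refine sum_le_sum fun i _ => ?_
  calc w1 i * (f i * u1 i) ^ 2 = f i ^ 2 * (w1 i * u1 i ^ 2) := by ring
    _ ≤ f i ^ 2 * (κ * (w0 i * u0 i ^ 2)) := mul_le_mul_of_nonneg_left (h i) (sq_nonneg _)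
    _ = κ * (w0 i * (f i * u0 i) ^ 2) := by ring

lemma groundStateTransform_form_le [DecidableEq ι] (hu0 : ∀ i, u0 i ≠ 0)
    {H0 H1 : Matrix ι ι ℝ} {c0 c1 : ι → ι → ℝ}
    (hrep0 : ∀ f : ι → ℝ, (fun i => f i * u0 i) ⬝ᵥ H0 *ᵥ (fun i => f i * u0 i) =
        (1 / 2) * ∑ i, ∑ j, c0 i j * (f i - f j) ^ 2)
    (hrep1 : ∀ f : ι → ℝ, (fun i => f i * u1 i) ⬝ᵥ H1 *ᵥ (fun i => f i * u1 i) =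
        (1 / 2) * ∑ i, ∑ j, c1 i j * (f i - f j) ^ 2)
    (hc : ∀ i j, c1 i j ≤ κ * c0 i j)
    {V0 V1 : ι → ℝ} (hV : ∀ i, V1 i * u1 i ^ 2 ≤ κ * (V0 i * u0 i ^ 2)) (ψ : ι → ℝ) :
    groundStateTransform u0 u1 ψ ⬝ᵥ (H1 + diagonal V1) *ᵥ groundStateTransform u0 u1 ψ ≤
      κ * (ψ ⬝ᵥ (H0 + diagonal V0) *ᵥ ψ) := by
  obtain ⟨f, rfl, hTψ⟩ := exists_eq_mul_and_groundStateTransform_eq_mul (u1 := u1) hu0 ψ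
  have hdirichlet : (1 / 2) * ∑ i, ∑ j, c1 i j * (f i - f j) ^ 2 ≤
      κ * ((1 / 2) * ∑ i, ∑ j, c0 i j * (f i - f j) ^ 2) := by
    have hsum : ∑ i, ∑ j, c1 i j * (f i - f j) ^ 2 ≤
        κ * ∑ i, ∑ j, c0 i j * (f i - f j) ^ 2 := by
      simp only [mul_sum, ← mul_assoc]
      gcongr with i _ j _
      exact hc i j
    linarith
  simp only [hTψ, add_mulVec, dotProduct_add, mul_add, hrep0, hrep1,
    dotProduct_diagonal_mulVec_self]
  exact add_le_add hdirichlet (sum_mul_mul_sq_le hV f)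

lemma groundStateTransform_norm_le (hu0 : ∀ i, u0 i ≠ 0) (h : ∀ i, u1 i ^ 2 ≤ κ * u0 i ^ 2)
    (ψ : ι → ℝ) :
    groundStateTransform u0 u1 ψ ⬝ᵥ groundStateTransform u0 u1 ψ ≤ κ * (ψ ⬝ᵥ ψ) := by
  obtain ⟨f, rfl, hTψ⟩ := exists_eq_mul_and_groundStateTransform_eq_mul (u1 := u1) hu0 ψ
  have := sum_mul_mul_sq_le (w0 := 1) (w1 := 1) (fun i => by simpa using h i) f
  simpa only [hTψ, dotProduct, Pi.one_apply, one_mul, sq] using this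

end GroundState

theorem eigenvalue_comparison_general {n : ℕ} (H0 H1 : Matrix (Fin n) (Fin n) ℝ)
    (u0 u1 : Fin n → ℝ) (hu0 : ∀ i, 0 < u0 i) (hu1 : ∀ i, 0 < u1 i)
    (c0 c1 : Fin n → Fin n → ℝ)
    (hrep0 : ∀ f : Fin n → ℝ,
      (fun i => f i * u0 i) ⬝ᵥ H0 *ᵥ (fun i => f i * u0 i) =
        (1 / 2) * ∑ i, ∑ j, c0 i j * (f i - f j) ^ 2)
    (hrep1 : ∀ f : Fin n → ℝ,
      (fun i => f i * u1 i) ⬝ᵥ H1 *ᵥ (fun i => f i * u1 i) =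
        (1 / 2) * ∑ i, ∑ j, c1 i j * (f i - f j) ^ 2)
    (βm βp : ℝ)
    (hβm : IsLeast (Set.range fun i => (u0 i / u1 i) ^ 2) βm)
    (hβp : IsGreatest (Set.range fun i => (u0 i / u1 i) ^ 2) βp)
    (hcc : ∀ i j, c1 i j ≤ βm⁻¹ * c0 i j)
    (V : Fin n → ℝ) (hV : ∀ i, V i ≤ 0)
    (hA : (H0 + Matrix.diagonal V).IsHermitian)
    (hB : (H1 + (βp / βm) • Matrix.diagonal V).IsHermitian) :
    ∀ j : Fin n, min 0 (sortedEigAsc hB j) ≤ min 0 (sortedEigAsc hA j) := by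
  have hu0_ne i := (hu0 i).ne'
  have hβm_pos : 0 < βm := by
    obtain ⟨i, rfl⟩ := hβm.1
    exact pow_pos (div_pos (hu0 i) (hu1 i)) 2
  have hlow (i : Fin n) : u1 i ^ 2 ≤ βm⁻¹ * u0 i ^ 2 := by
    have : βm ≤ (u0 i / u1 i) ^ 2 := hβm.2 ⟨i, rfl⟩
    rwa [div_pow, le_div_iff₀ (pow_pos (hu1 i) 2), ← le_inv_mul_iff₀ hβm_pos] at this
  have hhigh (i : Fin n) : u0 i ^ 2 ≤ βp * u1 i ^ 2 := by
    have : (u0 i / u1 i) ^ 2 ≤ βp := hβp.2 ⟨i, rfl⟩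
    rwa [div_pow, div_le_iff₀ (pow_pos (hu1 i) 2)] at this
  have hpotential (i : Fin n) : ((βp / βm) • V) i * u1 i ^ 2 ≤ βm⁻¹ * (V i * u0 i ^ 2) :=
    calc ((βp / βm) • V) i * u1 i ^ 2 = βm⁻¹ * (V i * (βp * u1 i ^ 2)) := by
          rw [Pi.smul_apply, smul_eq_mul]; ring
      _ ≤ βm⁻¹ * (V i * u0 i ^ 2) := mul_le_mul_of_nonneg_left
          (mul_le_mul_of_nonpos_left (hhigh i) (hV i)) (inv_nonneg.2 hβm_pos.le)
  exact min_zero_sortedEigAsc_le_of_injective hA hB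
    (groundStateTransform_injective hu0_ne fun i => (hu1 i).ne') (inv_nonneg.2 hβm_pos.le)
    (fun ψ => by
      rw [← diagonal_smul]
      exact groundStateTransform_form_le hu0_ne hrep0 hrep1 hcc hpotential ψ)
    (groundStateTransform_norm_le hu0_ne hlow)

/-- Finite-dimensional version of Theorem 2.1: eigenvalue comparison of
`H₀ + V` and `H₁ + βV` under ground state representations. -/
theorem eigenvalue_comparison {n : ℕ} (H0 H1 : Matrix (Fin n) (Fin n) ℝ)
    (hH0 : H0.IsSymm) (hH1 : H1.IsSymm)
    (u0 u1 : Fin n → ℝ) (hu0 : ∀ i, 0 < u0 i) (hu1 : ∀ i, 0 < u1 i)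
    (c0 c1 : Fin n → Fin n → ℝ)
    (hc0 : ∀ i j, 0 ≤ c0 i j) (hc1 : ∀ i j, 0 ≤ c1 i j)
    (hrep0 : ∀ f : Fin n → ℝ,
      (fun i => f i * u0 i) ⬝ᵥ H0 *ᵥ (fun i => f i * u0 i) =
        (1 / 2) * ∑ i, ∑ j, c0 i j * (f i - f j) ^ 2)
    (hrep1 : ∀ f : Fin n → ℝ,
      (fun i => f i * u1 i) ⬝ᵥ H1 *ᵥ (fun i => f i * u1 i) =
        (1 / 2) * ∑ i, ∑ j, c1 i j * (f i - f j) ^ 2)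
    (βm βp : ℝ)
    (hβm : IsLeast (Set.range fun i => (u0 i / u1 i) ^ 2) βm)
    (hβp : IsGreatest (Set.range fun i => (u0 i / u1 i) ^ 2) βp)
    (hcc : ∀ i j, c1 i j ≤ βm⁻¹ * c0 i j)
    (V : Fin n → ℝ) (hV : ∀ i, V i ≤ 0)
    (hA : (H0 + Matrix.diagonal V).IsHermitian)
    (hB : (H1 + (βp / βm) • Matrix.diagonal V).IsHermitian) :
    ∀ j : Fin n, min 0 (sortedEigAsc hB j) ≤ min 0 (sortedEigAsc hA j) :=
  eigenvalue_comparison_general H0 H1 u0 u1 hu0 hu1 c0 c1 hrep0 hrep1 βm βp hβm hβp hcc V hV hA hB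
end

section
/- Let J(a,b) be a tridiagonal n×n matrix with off-diagonals a_k > 0 and diagonal b. For perturbations δa ∈ ℝ^{n-1} with a + δa entrywise positive and δb ∈ ℝ^n, define b'_k = b_k + |δb_k| + |δa_{k-1}| + |δa_k| (with δa_0 = δa_n = 0). Then for every j, the j-th largest eigenvalue of J(a+δa, b+δb) is at most the j-th largest eigenvalue of J(a, b'). -/
/-!
The difference `J(a, b') - J(a + δa, b + δb) = J(-δa, b' - b - δb)` is positive semidefinite by
Gershgorin: its `k`-th diagonal entry `|δb k| - δb k + |δa (k-1)| + |δa k|` dominates the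
off-diagonal row sum `|δa (k-1)| + |δa k|`. Ordered eigenvalues are monotone for the Loewner
order by the Courant–Fischer dimension count.
-/

open Matrix

/-- The tridiagonal (Jacobi) `n×n` matrix with off-diagonal entries
`a 0, …, a (n-2)` (`a k` coupling sites `k` and `k+1`) and diagonal `b`. -/
def jacobi (n : ℕ) (a b : ℕ → ℝ) : Matrix (Fin n) (Fin n) ℝ :=
  Matrix.of fun i j =>
    if (j : ℕ) = (i : ℕ) + 1 then a i
    else if (i : ℕ) = (j : ℕ) + 1 then a j
    else if i = j then b i else 0

/-- The `j`-th largest eigenvalue of a Hermitian matrix (eigenvalues sorted in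
decreasing order). -/
noncomputable def sortedEigDesc {n : ℕ} {M : Matrix (Fin n) (Fin n) ℝ}
    (hM : M.IsHermitian) : Fin n → ℝ :=
  fun j => (hM.eigenvalues ∘ Tuple.sort hM.eigenvalues) j.rev

namespace Matrix.IsHermitian

variable {ι : Type*} [Fintype ι] [DecidableEq ι] {A : Matrix ι ι ℝ}

noncomputable def eigCoord (hA : A.IsHermitian) : (ι → ℝ) →ₗ[ℝ] ι → ℝ :=
  (star (hA.eigenvectorUnitary : Matrix ι ι ℝ)).mulVecLin

lemma dotProduct_self_eq_sum_eigCoord_sq (hA : A.IsHermitian) (x : ι → ℝ) :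
    x ⬝ᵥ x = ∑ i, hA.eigCoord x i ^ 2 := by
  have hU : (star (hA.eigenvectorUnitary : Matrix ι ι ℝ))ᵀ = hA.eigenvectorUnitary := by
    ext; simp
  simp only [sq, eigCoord, mulVecLin_apply]
  rw [← dotProduct, dotProduct_mulVec, ← mulVec_transpose, mulVec_mulVec, hU,
    mem_unitaryGroup_iff.mp hA.eigenvectorUnitary.2, one_mulVec]

lemma dotProduct_mulVec_eq_sum_eigCoord_sq (hA : A.IsHermitian) (x : ι → ℝ) :
    x ⬝ᵥ A *ᵥ x = ∑ i, hA.eigenvalues i * hA.eigCoord x i ^ 2 := by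
  conv_lhs => rw [hA.spectral_theorem]
  simp only [Unitary.conjStarAlgAut_apply, eigCoord, mulVecLin_apply, ← mulVec_mulVec]
  rw [dotProduct_mulVec, ← mulVec_transpose]
  simp [dotProduct, mulVec_diagonal, sq, mul_left_comm, star_eq_conjTranspose]

lemma mul_dotProduct_self_le_dotProduct_mulVec (hA : A.IsHermitian) {μ : ℝ} {x : ι → ℝ}
    (h : ∀ i, hA.eigCoord x i ≠ 0 → μ ≤ hA.eigenvalues i) : μ * (x ⬝ᵥ x) ≤ x ⬝ᵥ A *ᵥ x := by
  rw [hA.dotProduct_self_eq_sum_eigCoord_sq, hA.dotProduct_mulVec_eq_sum_eigCoord_sq,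
    Finset.mul_sum]
  refine Finset.sum_le_sum fun i _ => ?_
  by_cases hi : hA.eigCoord x i = 0
  · simp [hi]
  · exact mul_le_mul_of_nonneg_right (h i hi) (sq_nonneg _)

lemma dotProduct_mulVec_le_mul_dotProduct_self (hA : A.IsHermitian) {μ : ℝ} {x : ι → ℝ}
    (h : ∀ i, hA.eigCoord x i ≠ 0 → hA.eigenvalues i ≤ μ) : x ⬝ᵥ A *ᵥ x ≤ μ * (x ⬝ᵥ x) := by
  rw [hA.dotProduct_self_eq_sum_eigCoord_sq, hA.dotProduct_mulVec_eq_sum_eigCoord_sq,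
    Finset.mul_sum]
  refine Finset.sum_le_sum fun i _ => ?_
  by_cases hi : hA.eigCoord x i = 0
  · simp [hi]
  · exact mul_le_mul_of_nonneg_right (h i hi) (sq_nonneg _)

/-- By Gershgorin, every eigenvalue lies within `∑ j ≠ k, |M k j|` of some `M k k`. -/
theorem posSemidef_of_sum_row_le_diag {M : Matrix ι ι ℝ} (hM : M.IsHermitian)
    (h : ∀ i, ∑ j ∈ Finset.univ.erase i, |M i j| ≤ M i i) : M.PosSemidef := by
  refine hM.posSemidef_iff_eigenvalues_nonneg.mpr fun i => show 0 ≤ hM.eigenvalues i from ?_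
  have hμ : Module.End.HasEigenvalue (toLin' M) (hM.eigenvalues i) := by
    rw [Module.End.hasEigenvalue_iff_mem_spectrum, spectrum_toLin']
    exact hM.eigenvalues_mem_spectrum_real i
  obtain ⟨k, hk⟩ := eigenvalue_mem_ball hμ
  rw [Metric.mem_closedBall, Real.dist_eq] at hk
  simp only [Real.norm_eq_abs] at hk
  linarith [(abs_le.mp hk).1, h k]

end Matrix.IsHermitian

/-- Courant–Fischer: a vector orthogonal to the eigenvectors of `A` below the `k`-th (in
increasing order) and to those of `B` above it exists by a dimension count, and its Rayleigh
quotients are squeezed between the two `k`-th eigenvalues. -/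
theorem sortedEigDesc_le_of_posSemidef_sub {n : ℕ} {A B : Matrix (Fin n) (Fin n) ℝ}
    (hA : A.IsHermitian) (hB : B.IsHermitian) (hAB : (B - A).PosSemidef) (j : Fin n) :
    sortedEigDesc hA j ≤ sortedEigDesc hB j := by
  set k := j.rev
  set σA := Tuple.sort hA.eigenvalues
  set σB := Tuple.sort hB.eigenvalues
  let L : (Fin n → ℝ) →ₗ[ℝ] {p : Fin n // p ≠ k} → ℝ := LinearMap.pi fun p =>
    if (p : Fin n) < k then LinearMap.proj (σA p) ∘ₗ hA.eigCoord
    else LinearMap.proj (σB p) ∘ₗ hB.eigCoord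
  obtain ⟨x, hxL, hx0⟩ := (Submodule.ne_bot_iff _).mp <|
    L.ker_ne_bot_of_finrank_lt (by simpa [Fintype.card_subtype_compl] using k.pos)
  have hL (p : {p : Fin n // p ≠ k}) := congrFun (LinearMap.mem_ker.mp hxL) p
  have hxA : ∀ i, hA.eigCoord x i ≠ 0 → hA.eigenvalues (σA k) ≤ hA.eigenvalues i := by
    intro i hi
    obtain ⟨p, rfl⟩ := σA.surjective i
    refine Tuple.monotone_sort hA.eigenvalues (not_lt.mp fun hp => hi ?_)
    simpa [L, hp] using hL ⟨p, hp.ne⟩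
  have hxB : ∀ i, hB.eigCoord x i ≠ 0 → hB.eigenvalues i ≤ hB.eigenvalues (σB k) := by
    intro i hi
    obtain ⟨p, rfl⟩ := σB.surjective i
    refine Tuple.monotone_sort hB.eigenvalues (not_lt.mp fun hp => hi ?_)
    simpa [L, not_lt.mpr hp.le] using hL ⟨p, hp.ne'⟩
  have hxAB : x ⬝ᵥ A *ᵥ x ≤ x ⬝ᵥ B *ᵥ x := by
    simpa [sub_mulVec, dotProduct_sub] using hAB.dotProduct_mulVec_nonneg x
  have hxx : 0 < x ⬝ᵥ x := by simpa using dotProduct_star_self_pos_iff.mpr hx0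
  exact le_of_mul_le_mul_right ((hA.mul_dotProduct_self_le_dotProduct_mulVec hxA).trans
    (hxAB.trans (hB.dotProduct_mulVec_le_mul_dotProduct_self hxB))) hxx

lemma Fin.sum_ite_val_eq {M : Type*} [AddCommMonoid M] {n : ℕ} (m : ℕ) (r : M) :
    ∑ j : Fin n, (if (j : ℕ) = m then r else 0) = if m < n then r else 0 := by
  simp [Fin.sum_univ_eq_sum_range (fun j => if j = m then r else 0)]

lemma Fin.sum_ite_val_add_one_eq {M : Type*} [AddCommMonoid M] {n : ℕ} (i : Fin n) (r : M) :
    ∑ j : Fin n, (if (j : ℕ) + 1 = i then r else 0) = if (i : ℕ) = 0 then 0 else r := by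
  obtain hi | ⟨m, hm⟩ : (i : ℕ) = 0 ∨ ∃ m, (i : ℕ) = m + 1 := by
    rcases (i : ℕ) with _ | m <;> simp
  · simp [hi]
  · rw [hm]
    simp only [Nat.add_right_cancel_iff, Fin.sum_ite_val_eq, Nat.add_one_ne_zero, if_false]
    exact if_pos (by omega)

lemma jacobi_apply_self (n : ℕ) (a b : ℕ → ℝ) (i : Fin n) : jacobi n a b i i = b i := by
  simp [jacobi]

lemma jacobi_sub (n : ℕ) (a a' b b' : ℕ → ℝ) :
    jacobi n a b - jacobi n a' b' = jacobi n (a - a') (b - b') := by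
  ext i j
  simp only [jacobi, Matrix.sub_apply, of_apply, Pi.sub_apply]
  split_ifs <;> ring

lemma sum_abs_offDiag_jacobi (n : ℕ) (a b : ℕ → ℝ) (i : Fin n) :
    ∑ j ∈ Finset.univ.erase i, |jacobi n a b i j| =
      (if (i : ℕ) = 0 then 0 else |a (i - 1)|) + (if (i : ℕ) + 1 < n then |a i| else 0) := by
  have hentry : ∀ j ∈ Finset.univ.erase i, |jacobi n a b i j| =
      (if (j : ℕ) + 1 = i then |a (i - 1)| else 0) + (if (j : ℕ) = i + 1 then |a i| else 0) := by
    intro j hj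
    have hji : (j : ℕ) ≠ i := Fin.val_ne_of_ne (Finset.ne_of_mem_erase hj)
    simp only [jacobi, of_apply]
    split_ifs <;> grind
  rw [Finset.sum_congr rfl hentry, Finset.sum_erase _ (by simp), Finset.sum_add_distrib,
    Fin.sum_ite_val_add_one_eq, Fin.sum_ite_val_eq]

theorem jacobi_offdiag_reduction_general {n : ℕ} (a δa b δb : ℕ → ℝ)
    (h1 : (jacobi n (fun k => a k + δa k) (fun k => b k + δb k)).IsHermitian)
    (h2 : (jacobi n a (fun k => b k + |δb k| +
        (if k = 0 then 0 else |δa (k - 1)|) +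
        (if k + 1 < n then |δa k| else 0))).IsHermitian) :
    ∀ j : Fin n, sortedEigDesc h1 j ≤ sortedEigDesc h2 j := by
  refine sortedEigDesc_le_of_posSemidef_sub h1 h2
    ((h2.sub h1).posSemidef_of_sum_row_le_diag fun i => ?_)
  rw [jacobi_sub, sum_abs_offDiag_jacobi, jacobi_apply_self]
  simp only [Pi.sub_apply, sub_add_cancel_left, abs_neg]
  linarith [le_abs_self (δb i)]

/-- Hundertmark–Simon reduction: off-diagonal perturbations of a Jacobi matrix
can be absorbed into the diagonal, increasing each eigenvalue. -/
theorem jacobi_offdiag_reduction {n : ℕ} (a δa b δb : ℕ → ℝ)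
    (ha : ∀ k, k + 1 < n → 0 < a k)
    (hada : ∀ k, k + 1 < n → 0 < a k + δa k)
    (h1 : (jacobi n (fun k => a k + δa k) (fun k => b k + δb k)).IsHermitian)
    (h2 : (jacobi n a (fun k => b k + |δb k| +
        (if k = 0 then 0 else |δa (k - 1)|) +
        (if k + 1 < n then |δa k| else 0))).IsHermitian) :
    ∀ j : Fin n, sortedEigDesc h1 j ≤ sortedEigDesc h2 j :=
  jacobi_offdiag_reduction_general a δa b δb h1 h2
end

section
/- Let J be the tridiagonal n×n matrix with all off-diagonal entries equal to 1 and diagonal entries b_k, and suppose there exists u ∈ ℝ^n with (-1)^k u_k > 0 for all k and Ju = 0. Then J is positive semidefinite, and ⟨f∘u, J(f∘u)⟩ = -∑_{k=1}^{n-1} u_k u_{k+1}(f_{k+1}-f_k)^2 ≥ 0 for all f ∈ ℝ^n. -/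
/-!
Testing `J u = 0` against `f² u` expresses the diagonal part `∑ b_k f_k² u_k²` of the quadratic
form at `f u` through its edge terms; subtracting leaves
`⟨f u, J (f u)⟩ = -∑ a_k u_k u_{k+1} (f_{k+1} - f_k)²`, whose summands are nonnegative as soon as
every `a_k u_k u_{k+1} ≤ 0` (for `a = 1`: `u` alternates in sign). As `u` has no zeros, every
vector is of the form `f u`, so `J` is positive semidefinite.
-/

open Matrix

open Finset

namespace Finset

theorem sum_range_ite_add_one_lt {M : Type*} [AddCommMonoid M] {n : ℕ} (g : ℕ → M) :
    ∑ i ∈ range n, (if i + 1 < n then g i else 0) = ∑ k ∈ range (n - 1), g k := by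
  rw [← sum_filter]
  congr 1
  ext k
  simp only [mem_filter, mem_range]
  omega

theorem sum_range_ite_pos {M : Type*} [AddCommMonoid M] {n : ℕ} (g : ℕ → M) :
    ∑ i ∈ range n, (if 0 < i then g i else 0) = ∑ k ∈ range (n - 1), g (k + 1) := by
  cases n with
  | zero => simp
  | succ n => simp [sum_range_succ']

end Finset

theorem mul_neg_of_alternating_pos {k : ℕ} {x y : ℝ} (hx : 0 < (-1) ^ k * x)
    (hy : 0 < (-1) ^ (k + 1) * y) : x * y < 0 := by
  have hsq : ((-1 : ℝ) ^ k) ^ 2 = 1 := by rw [← pow_mul, pow_mul']; norm_num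
  have := mul_pos hx hy
  rw [pow_succ] at this
  nlinarith

section Jacobi

variable {n : ℕ} (a b : ℕ → ℝ)

theorem jacobi_isHermitian : (jacobi n a b).IsHermitian := by
  ext i j
  simp only [conjTranspose_apply, jacobi, of_apply, star_trivial]
  by_cases hij : i = j
  · subst hij; rfl
  · have : (i : ℕ) ≠ j := Fin.val_ne_of_ne hij
    simp only [hij, Ne.symm hij, if_false]
    split_ifs <;> first | rfl | omega

theorem jacobi_mulVec_apply (y : ℕ → ℝ) (i : Fin n) :
    (jacobi n a b *ᵥ fun j => y j) i =
      b i * y i + (if (i : ℕ) + 1 < n then a i * y (i + 1) else 0) +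
        (if 0 < (i : ℕ) then a (i - 1) * y (i - 1) else 0) := by
  have hsplit : ∀ j : ℕ,
      (if j = i + 1 then a i else if (i : ℕ) = j + 1 then a j else if (i : ℕ) = j then b i else 0) *
          y j =
        (if j = i then b i * y j else 0) + (if j = i + 1 then a i * y j else 0) +
          (if 0 < (i : ℕ) then if j = i - 1 then a (i - 1) * y j else 0 else 0) := by
    intro j
    split_ifs <;> subst_vars <;> first | (exfalso; omega) | ring
  simp only [mulVec, dotProduct, jacobi, of_apply, Fin.ext_iff]
  rw [Fin.sum_univ_eq_sum_range (fun j => (if j = i + 1 then a i else if (i : ℕ) = j + 1 then a j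
    else if (i : ℕ) = j then b i else 0) * y j)]
  have hi : (i : ℕ) - 1 < n := by omega
  simp only [hsplit, sum_add_distrib, sum_ite_eq', sum_ite_irrel, sum_const_zero, mem_range,
    i.isLt, hi, if_true]

theorem dotProduct_jacobi_mulVec (x y : ℕ → ℝ) :
    (fun i : Fin n => x i) ⬝ᵥ jacobi n a b *ᵥ (fun i : Fin n => y i) =
      ∑ i ∈ range n, b i * x i * y i +
        ∑ k ∈ range (n - 1), a k * (x k * y (k + 1) + x (k + 1) * y k) := by
  rw [dotProduct]
  simp_rw [jacobi_mulVec_apply]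
  rw [Fin.sum_univ_eq_sum_range (fun i => x i * (b i * y i +
    (if i + 1 < n then a i * y (i + 1) else 0) + (if 0 < i then a (i - 1) * y (i - 1) else 0)))]
  simp only [mul_add, mul_ite, mul_zero, sum_add_distrib, sum_range_ite_add_one_lt,
    sum_range_ite_pos, add_tsub_cancel_right]
  rw [add_assoc]
  congr 1
  · exact sum_congr rfl fun _ _ => by ring
  · congr 1 <;> exact sum_congr rfl fun _ _ => by ring

variable {a b} {u : ℕ → ℝ}

theorem jacobi_groundState (hu : jacobi n a b *ᵥ (fun i => u i) = 0) (f : ℕ → ℝ) :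
    (fun i : Fin n => f i * u i) ⬝ᵥ jacobi n a b *ᵥ (fun i : Fin n => f i * u i) =
      -∑ k ∈ range (n - 1), a k * u k * u (k + 1) * (f (k + 1) - f k) ^ 2 := by
  have hnull := dotProduct_jacobi_mulVec (n := n) a b (fun i => f i ^ 2 * u i) u
  rw [hu, dotProduct_zero] at hnull
  have hdiag : ∑ i ∈ range n, b i * (f i * u i) * (f i * u i) =
      ∑ i ∈ range n, b i * (f i ^ 2 * u i) * u i :=
    sum_congr rfl fun _ _ => by ring
  have hedge :
      ∑ k ∈ range (n - 1),
          a k * (f k * u k * (f (k + 1) * u (k + 1)) + f (k + 1) * u (k + 1) * (f k * u k)) =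
        ∑ k ∈ range (n - 1), a k * (f k ^ 2 * u k * u (k + 1) + f (k + 1) ^ 2 * u (k + 1) * u k) -
          ∑ k ∈ range (n - 1), a k * u k * u (k + 1) * (f (k + 1) - f k) ^ 2 := by
    rw [← sum_sub_distrib]
    exact sum_congr rfl fun _ _ => by ring
  rw [dotProduct_jacobi_mulVec a b (fun i => f i * u i) (fun i => f i * u i)]
  linear_combination hdiag + hedge - hnull

theorem jacobi_groundState_nonneg (hu : jacobi n a b *ᵥ (fun i => u i) = 0)
    (hsign : ∀ k < n - 1, a k * u k * u (k + 1) ≤ 0) (f : ℕ → ℝ) :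
    0 ≤ (fun i : Fin n => f i * u i) ⬝ᵥ jacobi n a b *ᵥ (fun i : Fin n => f i * u i) := by
  rw [jacobi_groundState hu, neg_nonneg]
  exact sum_nonpos fun k hk =>
    mul_nonpos_of_nonpos_of_nonneg (hsign k (mem_range.1 hk)) (sq_nonneg _)

theorem jacobi_posSemidef_of_groundState (hu : jacobi n a b *ᵥ (fun i => u i) = 0)
    (hu0 : ∀ k < n, u k ≠ 0)
    (hsign : ∀ k < n - 1, a k * u k * u (k + 1) ≤ 0) : (jacobi n a b).PosSemidef := by
  refine .of_dotProduct_mulVec_nonneg (jacobi_isHermitian a b) fun x => ?_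
  let f : ℕ → ℝ := fun k => if h : k < n then x ⟨k, h⟩ / u k else 0
  have hx : (fun i : Fin n => f i * u i) = x :=
    funext fun i => by simp [f, div_mul_cancel₀ _ (hu0 i i.isLt)]
  rw [star_trivial, ← hx]
  exact jacobi_groundState_nonneg hu hsign f

end Jacobi

/-- Ground state representation at the bottom of the spectrum: an alternating
positive null vector of a Jacobi matrix with off-diagonals `1` yields positive
semidefiniteness of `+J`. -/
theorem jacobi_alternating_groundState {n : ℕ} (b : ℕ → ℝ)
    (u : ℕ → ℝ) (hu : ∀ k, k < n → 0 < (-1 : ℝ) ^ k * u k)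
    (hJu : jacobi n (fun _ => 1) b *ᵥ (fun i => u i) = 0) :
    (jacobi n (fun _ => 1) b).PosSemidef ∧
    ∀ f : ℕ → ℝ,
      (fun i : Fin n => f i * u i) ⬝ᵥ (jacobi n (fun _ => 1) b) *ᵥ
          (fun i : Fin n => f i * u i) =
        -∑ k ∈ Finset.range (n - 1), u k * u (k + 1) * (f (k + 1) - f k) ^ 2 ∧
      0 ≤ (fun i : Fin n => f i * u i) ⬝ᵥ (jacobi n (fun _ => 1) b) *ᵥ
          (fun i : Fin n => f i * u i) := by
  have hu0 : ∀ k < n, u k ≠ 0 := fun k hk h => by simpa [h] using hu k hk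
  have hsign : ∀ k < n - 1, (fun _ => (1 : ℝ)) k * u k * u (k + 1) ≤ 0 := fun k hk => by
    simpa using (mul_neg_of_alternating_pos (hu k (by omega)) (hu (k + 1) (by omega))).le
  refine ⟨jacobi_posSemidef_of_groundState hJu hu0 hsign, fun f => ⟨?_, ?_⟩⟩
  · simpa only [one_mul] using jacobi_groundState hJu f
  · exact jacobi_groundState_nonneg hJu hsign f
end

section
/- Let u : ℝ^ν → ℝ be smooth with 0 < c_1 ≤ u ≤ c_2, V_0 = Δu/u, and β = (c_2/c_1)^2. Let V : ℝ^ν → ℝ be continuous, bounded, and nonpositive, and let τ > 0. If g is a compactly supported smooth function with ∫(|∇(gu)|^2 + (V_0+V)(gu)^2)dx ≤ -τ ∫ (gu)^2 dx, then ∫(|∇g|^2 + βV g^2)dx ≤ -τ ∫ g^2 dx. -/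
open MeasureTheory

/-- The squared Euclidean norm of the gradient of `f : ℝ^ν → ℝ` at `x`. -/
noncomputable def gradSq {ν : ℕ} (f : EuclideanSpace ℝ (Fin ν) → ℝ)
    (x : EuclideanSpace ℝ (Fin ν)) : ℝ :=
  ∑ i, (fderiv ℝ f x (EuclideanSpace.single i 1)) ^ 2

/-- The Laplacian of `f : ℝ^ν → ℝ` at `x`, as the sum of the repeated
directional derivatives along the standard basis directions. -/
noncomputable def lap {ν : ℕ} (f : EuclideanSpace ℝ (Fin ν) → ℝ)
    (x : EuclideanSpace ℝ (Fin ν)) : ℝ :=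
  ∑ i, fderiv ℝ (fun y => fderiv ℝ f y (EuclideanSpace.single i 1)) x
    (EuclideanSpace.single i 1)


lemma aux_ibp {ν : ℕ} (F : EuclideanSpace ℝ (Fin ν) → ℝ) (hF : ContDiff ℝ (⊤ : ℕ∞) F)
    (hFs : HasCompactSupport F) (v : EuclideanSpace ℝ (Fin ν)) :
    ∫ x, fderiv ℝ F x v = 0 := by
  obtain ⟨D, hlip⟩ : ∃ D, LipschitzWith D F :=
    ContDiff.lipschitzWith_of_hasCompactSupport hFs hF (by simp)
  have key := LipschitzWith.integral_lineDeriv_mul_eq (μ := volume)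
    (LipschitzWith.const (b := (1:ℝ))) hlip hFs (-v)
  have hc : ∀ x : EuclideanSpace ℝ (Fin ν), lineDeriv ℝ (fun _ => (1:ℝ)) x (-v) = 0 := by
    intro x
    rw [(differentiableAt_const (1:ℝ)).lineDeriv_eq_fderiv, fderiv_fun_const]
    simp
  simp only [hc, zero_mul, integral_zero, neg_neg, mul_one] at key
  have : ∀ x, lineDeriv ℝ F x v = fderiv ℝ F x v := fun x =>
    (hF.differentiable (by simp)).differentiableAt.lineDeriv_eq_fderiv
  simp only [this] at key
  exact key.symm

lemma aux_pointwise {ν : ℕ} (u g : EuclideanSpace ℝ (Fin ν) → ℝ)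
    (hu : ContDiff ℝ (⊤ : ℕ∞) u) (hg : ContDiff ℝ (⊤ : ℕ∞) g) (x : EuclideanSpace ℝ (Fin ν))
    (hux : u x ≠ 0) :
    gradSq (fun y => g y * u y) x + (lap u x / u x) * (g x * u x) ^ 2
      = (u x) ^ 2 * gradSq g x
        + ∑ i, fderiv ℝ
            (fun y => g y * (g y * u y * fderiv ℝ u y (EuclideanSpace.single i 1))) x
            (EuclideanSpace.single i 1) := by
  have hdg := hg.differentiable (by simp)
  have hdu := hu.differentiable (by simp)
  have hddu : ∀ i, Differentiable ℝ
      (fun y => fderiv ℝ u y (EuclideanSpace.single i 1)) := fun i =>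
    ((hu.fderiv_right (m := (⊤ : ℕ∞)) ((by simp))).clm_apply contDiff_const).differentiable (by simp)
  have hmul : ∀ (a b : EuclideanSpace ℝ (Fin ν) → ℝ), Differentiable ℝ a →
      Differentiable ℝ b → ∀ v, fderiv ℝ (fun y => a y * b y) x v
        = a x * fderiv ℝ b x v + b x * fderiv ℝ a x v := by
    intro a b ha hb v
    rw [fderiv_fun_mul (ha x) (hb x)]
    simp [smul_eq_mul]
  have hstep : ∀ v, fderiv ℝ (fun y => g y * u y) x v
      = g x * fderiv ℝ u x v + u x * fderiv ℝ g x v := hmul g u hdg hdu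
  have hstep2 : ∀ i, fderiv ℝ
      (fun y => g y * (g y * u y * fderiv ℝ u y (EuclideanSpace.single i 1))) x
      (EuclideanSpace.single i 1)
      = g x * ((g x * u x) * fderiv ℝ (fun y => fderiv ℝ u y (EuclideanSpace.single i 1)) x
            (EuclideanSpace.single i 1)
          + fderiv ℝ u x (EuclideanSpace.single i 1)
            * (g x * fderiv ℝ u x (EuclideanSpace.single i 1)
              + u x * fderiv ℝ g x (EuclideanSpace.single i 1)))
        + (g x * u x * fderiv ℝ u x (EuclideanSpace.single i 1))
            * fderiv ℝ g x (EuclideanSpace.single i 1) := by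
    intro i
    rw [hmul g (fun y => g y * u y * fderiv ℝ u y (EuclideanSpace.single i 1)) hdg
      (((hdg.mul hdu)).mul (hddu i)) (EuclideanSpace.single i 1)]
    rw [hmul (fun y => g y * u y) (fun y => fderiv ℝ u y (EuclideanSpace.single i 1))
      (hdg.mul hdu) (hddu i) (EuclideanSpace.single i 1)]
    rw [hstep]
  simp only [gradSq, lap, hstep, hstep2]
  have hdiv : (∑ i, fderiv ℝ (fun y => fderiv ℝ u y (EuclideanSpace.single i 1)) x
        (EuclideanSpace.single i 1)) / u x * (g x * u x) ^ 2
      = ∑ i, fderiv ℝ (fun y => fderiv ℝ u y (EuclideanSpace.single i 1)) x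
          (EuclideanSpace.single i 1) * (g x ^ 2 * u x) := by
    rw [div_mul_eq_mul_div, div_eq_iff hux, Finset.sum_mul, Finset.sum_mul]
    exact Finset.sum_congr rfl fun i _ => by ring
  rw [hdiv, Finset.mul_sum, ← Finset.sum_add_distrib, ← Finset.sum_add_distrib]
  exact Finset.sum_congr rfl fun i _ => by ring

/-- Comparison lemma for Schrödinger operators (Lemma 2.1, free comparison):
a negative-energy trial function for `-Δ + V₀ + V` transfers to one for
`-Δ + βV`, where `β = (c₂/c₁)²`. -/
theorem schrodinger_comparison {ν : ℕ}
    (u : EuclideanSpace ℝ (Fin ν) → ℝ) (hu : ContDiff ℝ (⊤ : ℕ∞) u)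
    (c1 c2 : ℝ) (hc1 : 0 < c1)
    (hbound : ∀ x, c1 ≤ u x ∧ u x ≤ c2)
    (V0 : EuclideanSpace ℝ (Fin ν) → ℝ) (hV0 : ∀ x, V0 x = lap u x / u x)
    (V : EuclideanSpace ℝ (Fin ν) → ℝ) (hVcont : Continuous V)
    (hVbdd : ∃ M, ∀ x, |V x| ≤ M) (hV : ∀ x, V x ≤ 0)
    (τ : ℝ) (hτ : 0 < τ)
    (g : EuclideanSpace ℝ (Fin ν) → ℝ) (hg : ContDiff ℝ (⊤ : ℕ∞) g)
    (hgsupp : HasCompactSupport g)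
    (htrial : ∫ x, (gradSq (fun y => g y * u y) x
        + (V0 x + V x) * (g x * u x) ^ 2)
      ≤ -τ * ∫ x, (g x * u x) ^ 2) :
    ∫ x, (gradSq g x + (c2 / c1) ^ 2 * V x * (g x) ^ 2)
      ≤ -τ * ∫ x, (g x) ^ 2 := by
  classical
  have hu0 : ∀ x, u x ≠ 0 := fun x => ne_of_gt (lt_of_lt_of_le hc1 (hbound x).1)
  have hgcont := hg.continuous
  have hucont := hu.continuous
  -- auxiliary vector fields
  set F : Fin ν → EuclideanSpace ℝ (Fin ν) → ℝ :=
    fun i y => g y * (g y * u y * fderiv ℝ u y (EuclideanSpace.single i 1)) with hF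
  have hFsm : ∀ i, ContDiff ℝ (⊤ : ℕ∞) (F i) := fun i =>
    hg.mul ((hg.mul hu).mul ((hu.fderiv_right (by simp)).clm_apply contDiff_const))
  have hFsupp : ∀ i, HasCompactSupport (F i) := fun i => hgsupp.mul_right
  have hIBP : ∀ i, ∫ x, fderiv ℝ (F i) x (EuclideanSpace.single i 1) = 0 := fun i =>
    aux_ibp (F i) (hFsm i) (hFsupp i) _
  -- continuity and support lemmas
  have hgrad_cont : Continuous (fun x => gradSq g x) := by
    unfold gradSq
    exact continuous_finset_sum _ fun i _ =>
      ((hg.continuous_fderiv (by simp)).clm_apply continuous_const).pow 2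
  have hgrad0 : ∀ x ∉ tsupport g, gradSq g x = 0 := by
    intro x hx
    have h0 : fderiv ℝ g x = 0 := by
      by_contra h
      exact hx (support_fderiv_subset ℝ (Function.mem_support.2 h))
    simp [gradSq, h0]
  have hint : ∀ f : EuclideanSpace ℝ (Fin ν) → ℝ, Continuous f →
      (∀ x ∉ tsupport g, f x = 0) → Integrable f := fun f hf h0 =>
    hf.integrable_of_hasCompactSupport (HasCompactSupport.intro hgsupp h0)
  have hg0 : ∀ x ∉ tsupport g, g x = 0 := fun x hx => image_eq_zero_of_notMem_tsupport hx
  have intgrad : Integrable (fun x => gradSq g x) := hint _ hgrad_cont hgrad0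
  have intVg : Integrable (fun x => (c2 / c1) ^ 2 * V x * g x ^ 2) :=
    hint _ (((continuous_const.mul hVcont).mul (hgcont.pow 2)))
      (fun x hx => by simp [hg0 x hx])
  have intA : Integrable (fun x => u x ^ 2 * gradSq g x) :=
    hint _ ((hucont.pow 2).mul hgrad_cont) (fun x hx => by simp [hgrad0 x hx])
  have intB : Integrable (fun x => V x * u x ^ 2 * g x ^ 2) :=
    hint _ ((hVcont.mul (hucont.pow 2)).mul (hgcont.pow 2))
      (fun x hx => by simp [hg0 x hx])
  have intg2 : Integrable (fun x => g x ^ 2) :=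
    hint _ (hgcont.pow 2) (fun x hx => by simp [hg0 x hx])
  have intgu2 : Integrable (fun x => (g x * u x) ^ 2) :=
    hint _ ((hgcont.mul hucont).pow 2) (fun x hx => by simp [hg0 x hx])
  have intD : ∀ i, Integrable (fun x => fderiv ℝ (F i) x (EuclideanSpace.single i 1)) := by
    intro i
    apply hint _ (((hFsm i).continuous_fderiv (by simp)).clm_apply continuous_const)
    intro x hx
    have hFx : ∀ y ∉ tsupport g, F i y = 0 := fun y hy => by simp [hF, hg0 y hy]
    have h0 : fderiv ℝ (F i) x = 0 := by
      by_contra h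
      have hmem := support_fderiv_subset ℝ (Function.mem_support.2 h)
      have : x ∈ tsupport (F i) := hmem
      rw [tsupport] at this
      -- tsupport (F i) ⊆ tsupport g
      have hsub : tsupport (F i) ⊆ tsupport g := by
        apply closure_minimal _ (isClosed_closure)
        intro y hy
        by_contra hyg
        exact (Function.mem_support.1 hy) (hFx y hyg)
      exact hx (hsub hmem)
    simp [h0]
  have intSum : Integrable (fun x => ∑ i, fderiv ℝ (F i) x (EuclideanSpace.single i 1)) :=
    integrable_finset_sum _ fun i _ => intD i
  -- the pointwise identity
  have hbig : ∀ x, gradSq (fun y => g y * u y) x + (V0 x + V x) * (g x * u x) ^ 2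
      = (u x ^ 2 * gradSq g x + V x * u x ^ 2 * g x ^ 2)
        + ∑ i, fderiv ℝ (F i) x (EuclideanSpace.single i 1) := by
    intro x
    have h := aux_pointwise u g hu hg x (hu0 x)
    rw [hV0]
    linear_combination h
  -- transfer htrial
  have hA : (∫ x, (u x ^ 2 * gradSq g x + V x * u x ^ 2 * g x ^ 2))
      ≤ -τ * ∫ x, (g x * u x) ^ 2 := by
    have hsplit : (∫ x, (gradSq (fun y => g y * u y) x + (V0 x + V x) * (g x * u x) ^ 2))
        = (∫ x, (u x ^ 2 * gradSq g x + V x * u x ^ 2 * g x ^ 2))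
          + ∫ x, ∑ i, fderiv ℝ (F i) x (EuclideanSpace.single i 1) := by
      simp only [hbig]
      exact integral_add (intA.add intB) intSum
    have hzero : (∫ x, ∑ i, fderiv ℝ (F i) x (EuclideanSpace.single i 1)) = 0 := by
      rw [integral_finset_sum _ fun i _ => intD i]
      simp [hIBP]
    rw [hsplit, hzero, add_zero] at htrial
    exact htrial
  -- pointwise comparison
  have hgradnn : ∀ x, 0 ≤ gradSq g x := fun x =>
    Finset.sum_nonneg fun i _ => sq_nonneg _
  have hmono1 : c1 ^ 2 * (∫ x, (gradSq g x + (c2 / c1) ^ 2 * V x * (g x) ^ 2))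
      ≤ ∫ x, (u x ^ 2 * gradSq g x + V x * u x ^ 2 * g x ^ 2) := by
    rw [← integral_const_mul]
    apply integral_mono ((intgrad.add intVg).const_mul _) (intA.add intB)
    intro x
    have hb1 := (hbound x).1
    have hb2 := (hbound x).2
    have hVx := hV x
    have h1 : c1 ^ 2 * gradSq g x ≤ u x ^ 2 * gradSq g x := by
      apply mul_le_mul_of_nonneg_right _ (hgradnn x)
      nlinarith
    have h2 : c2 ^ 2 * (V x * g x ^ 2) ≤ u x ^ 2 * (V x * g x ^ 2) := by
      apply mul_le_mul_of_nonpos_right _ (by nlinarith [sq_nonneg (g x)])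
      nlinarith
    have hc1' : c1 ≠ 0 := ne_of_gt hc1
    calc c1 ^ 2 * (gradSq g x + (c2 / c1) ^ 2 * V x * g x ^ 2)
        = c1 ^ 2 * gradSq g x + c2 ^ 2 * (V x * g x ^ 2) := by
          field_simp
      _ ≤ u x ^ 2 * gradSq g x + u x ^ 2 * (V x * g x ^ 2) := add_le_add h1 h2
      _ = u x ^ 2 * gradSq g x + V x * u x ^ 2 * g x ^ 2 := by ring
  have hmono2 : c1 ^ 2 * ∫ x, g x ^ 2 ≤ ∫ x, (g x * u x) ^ 2 := by
    rw [← integral_const_mul]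
    apply integral_mono (intg2.const_mul _) intgu2
    intro x
    have hb1 := (hbound x).1
    have hsq : c1 ^ 2 ≤ u x ^ 2 := by nlinarith
    have h := mul_nonneg (sq_nonneg (g x)) (sub_nonneg.2 hsq)
    simp only []
    nlinarith [h]
  have hstep3 : -τ * ∫ x, (g x * u x) ^ 2 ≤ c1 ^ 2 * (-τ * ∫ x, g x ^ 2) := by
    nlinarith
  have hfinal : c1 ^ 2 * (∫ x, (gradSq g x + (c2 / c1) ^ 2 * V x * (g x) ^ 2))
      ≤ c1 ^ 2 * (-τ * ∫ x, g x ^ 2) := le_trans hmono1 (le_trans hA hstep3)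
  exact le_of_mul_le_mul_left hfinal (by positivity)
end
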